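/- arXiv:2409.19285 — 5 statements merged into one kernel-verified Lean document; each statement's English description precedes it below -/
import Mathlib

section
/- The function b'(x) = (1-4x) * sqrt(1-x) / (2 * sqrt(x)) is strictly convex on (0,1). -/
/-!
With `b x = √((1 - x) ^ 3 * x)`, the function is `b'`, and a direct computation gives
`b''' x = 3 / (8 x ^ (5/2) (1 - x) ^ (3/2))`, which is positive on `(0, 1)`.
-/

open Real

theorem strictConvexOn_of_hasDerivAt2_pos {D : Set ℝ} (hD : Convex ℝ D) (hD' : IsOpen D)
    {f f' f'' : ℝ → ℝ} (hf : ∀ x ∈ D, HasDerivAt f (f' x) x)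
    (hf' : ∀ x ∈ D, HasDerivAt f' (f'' x) x) (hf'' : ∀ x ∈ D, 0 < f'' x) :
    StrictConvexOn ℝ D f := by
  have hderiv : D.EqOn f' (deriv f) := fun x hx => (hf x hx).deriv.symm
  have hmono : StrictMonoOn f' D :=
    strictMonoOn_of_hasDerivWithinAt_pos hD
      (fun x hx => (hf' x hx).continuousAt.continuousWithinAt)
      (fun x hx => (hf' x (interior_subset hx)).hasDerivWithinAt)
      (fun x hx => hf'' x (interior_subset hx))
  refine StrictMonoOn.strictConvexOn_of_deriv hD
    (fun x hx => (hf x hx).continuousAt.continuousWithinAt) ?_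
  rw [hD'.interior_eq]
  exact hmono.congr hderiv

theorem hasDerivAt_sqrt_one_sub {x : ℝ} (hx : x < 1) :
    HasDerivAt (fun y => √(1 - y)) (-1 / (2 * √(1 - x))) x := by
  simpa using ((hasDerivAt_id x).const_sub 1).sqrt (sub_pos.2 hx).ne'

noncomputable def bDeriv (x : ℝ) : ℝ := (1 - 4 * x) * √(1 - x) / (2 * √x)

noncomputable def bDeriv2 (x : ℝ) : ℝ := (8 * x ^ 2 - 4 * x - 1) / (4 * x * √x * √(1 - x))

noncomputable def bDeriv3 (x : ℝ) : ℝ := 3 / (8 * x ^ 2 * √x * (1 - x) * √(1 - x))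

theorem hasDerivAt_bDeriv {x : ℝ} (hx₀ : 0 < x) (hx₁ : x < 1) :
    HasDerivAt bDeriv (bDeriv2 x) x := by
  have h1x : 0 < 1 - x := sub_pos.2 hx₁
  have hlin : HasDerivAt (fun y : ℝ => 1 - 4 * y) (-4) x := by
    simpa using ((hasDerivAt_id' x).const_mul 4).const_sub 1
  refine ((hlin.fun_mul (hasDerivAt_sqrt_one_sub hx₁)).fun_div
    ((hasDerivAt_sqrt hx₀.ne').const_mul 2) (by positivity)).congr_deriv ?_
  rw [bDeriv2]
  field_simp
  rw [sq_sqrt hx₀.le, sq_sqrt h1x.le]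
  ring

theorem hasDerivAt_bDeriv2 {x : ℝ} (hx₀ : 0 < x) (hx₁ : x < 1) :
    HasDerivAt bDeriv2 (bDeriv3 x) x := by
  have h1x : 0 < 1 - x := sub_pos.2 hx₁
  have hquad : HasDerivAt (fun y : ℝ => 8 * y ^ 2 - 4 * y - 1) (16 * x - 4) x := by
    refine ((((hasDerivAt_pow 2 x).const_mul 8).fun_sub
      ((hasDerivAt_id' x).const_mul 4)).sub_const 1).congr_deriv ?_
    norm_num
    ring
  refine (hquad.fun_div ((((hasDerivAt_id' x).const_mul 4).fun_mul
    (hasDerivAt_sqrt hx₀.ne')).fun_mul (hasDerivAt_sqrt_one_sub hx₁))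
    (by positivity)).congr_deriv ?_
  rw [bDeriv3]
  field_simp
  rw [sq_sqrt hx₀.le, sq_sqrt h1x.le]
  ring

theorem bDeriv3_pos {x : ℝ} (hx₀ : 0 < x) (hx₁ : x < 1) : 0 < bDeriv3 x := by
  have h1x : 0 < 1 - x := sub_pos.2 hx₁
  unfold bDeriv3
  positivity

theorem stmt_2 :
    StrictConvexOn ℝ (Set.Ioo (0 : ℝ) 1)
      (fun x => (1 - 4 * x) * Real.sqrt (1 - x) / (2 * Real.sqrt x)) :=
  strictConvexOn_of_hasDerivAt2_pos (convex_Ioo 0 1) isOpen_Ioo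
    (fun _ hx => hasDerivAt_bDeriv hx.1 hx.2) (fun _ hx => hasDerivAt_bDeriv2 hx.1 hx.2)
    (fun _ hx => bDeriv3_pos hx.1 hx.2)
end

section
/- For real parameters a1, a2 with a2 + a1 > 0, the equation a2*x + a1 = b'(x), where b'(x) = (1-4x)*sqrt(1-x)/(2*sqrt(x)), has exactly one solution x in (0,1). -/
/-!
`bPrime` is `b'`, and `bSecond`, `bThird` are its first two derivatives. Since `bThird > 0` on
`(0, 1)`, `b'` is strictly convex on `(0, 1]`; moreover `b' → +∞` at `0⁺` and `b'(1) = 0`. Hence `b'`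
minus the line `a2 * x + a1` is strictly convex on `(0, 1]`, tends to `+∞` at `0⁺` and is negative
at `1`. The intermediate value theorem gives a zero in `(0, 1)`, and by strict convexity the function
is negative strictly between any zero and `1`, which rules out a second zero.
-/

open Filter Topology Set Real

theorem StrictConvexOn.existsUnique_zero {f : ℝ → ℝ} {a b : ℝ} (hab : a < b)
    (hf : StrictConvexOn ℝ (Ioc a b) f) (hfc : ContinuousOn f (Ioc a b))
    (hfa : Tendsto f (𝓝[>] a) atTop) (hfb : f b < 0) :
    ∃! x, x ∈ Ioo a b ∧ f x = 0 := by
  have hb : b ∈ Ioc a b := right_mem_Ioc.2 hab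
  have hl : 𝓝[>] a ≤ 𝓟 (Ioc a b) := by
    rw [← nhdsWithin_Ioc_eq_nhdsGT hab]
    exact inf_le_right
  obtain ⟨x, hx, hfx⟩ : (0 : ℝ) ∈ f '' Ioc a b :=
    isPreconnected_Ioc.intermediate_value_Ici hb hl hfc hfa hfb.le
  have hxb : x < b := lt_of_le_of_ne hx.2 (by rintro rfl; exact hfb.ne hfx)
  have neg_of_zero : ∀ y ∈ Ioo a b, f y = 0 → ∀ z ∈ Ioo y b, f z < 0 := fun y hy hfy z hz => by
    have := hf.lt_on_openSegment (Ioo_subset_Ioc_self hy) hb hy.2.ne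
      ((openSegment_eq_Ioo hy.2).symm ▸ hz)
    rwa [hfy, max_eq_left hfb.le] at this
  refine ⟨x, ⟨⟨hx.1, hxb⟩, hfx⟩, fun y ⟨hy, hfy⟩ => le_antisymm ?_ ?_⟩
  · exact not_lt.1 fun hxy => (neg_of_zero x ⟨hx.1, hxb⟩ hfx y ⟨hxy, hy.2⟩).ne hfy
  · exact not_lt.1 fun hyx => (neg_of_zero y hy hfy x ⟨hyx, hxb⟩).ne hfx

noncomputable def bPrime (x : ℝ) : ℝ := (1 - 4 * x) * √(1 - x) / (2 * √x)

noncomputable def bSecond (x : ℝ) : ℝ := (8 * x ^ 2 - 4 * x - 1) / (4 * x * √x * √(1 - x))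

noncomputable def bThird (x : ℝ) : ℝ := 3 / (8 * x ^ 2 * √x * (1 - x) * √(1 - x))

lemma hasDerivAt_bPrime {x : ℝ} (hx0 : 0 < x) (hx1 : x < 1) : HasDerivAt bPrime (bSecond x) x := by
  have h1x : 1 - x ≠ 0 := by linarith
  have hs2 : √x ^ 2 = x := sq_sqrt hx0.le
  have ht2 : √(1 - x) ^ 2 = 1 - x := sq_sqrt (by linarith)
  have h : HasDerivAt (fun y => (1 - 4 * y) * √(1 - y) / (2 * √y)) _ x :=
    (((hasDerivAt_id' x).const_mul 4).const_sub 1).mul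
      ((hasDerivAt_sqrt h1x).comp x ((hasDerivAt_id' x).const_sub 1)) |>.div
      ((hasDerivAt_sqrt hx0.ne').const_mul 2) (by positivity)
  refine h.congr_deriv ?_
  simp only [bSecond, Pi.mul_apply, Function.comp_apply]
  field_simp
  grind

lemma hasDerivAt_bSecond {x : ℝ} (hx0 : 0 < x) (hx1 : x < 1) : HasDerivAt bSecond (bThird x) x := by
  have h1x : 1 - x ≠ 0 := by linarith
  have hs2 : √x ^ 2 = x := sq_sqrt hx0.le
  have ht2 : √(1 - x) ^ 2 = 1 - x := sq_sqrt (by linarith)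
  have h : HasDerivAt (fun y => (8 * y ^ 2 - 4 * y - 1) / (4 * y * √y * √(1 - y))) _ x :=
    ((((hasDerivAt_pow 2 x).const_mul 8).sub ((hasDerivAt_id' x).const_mul 4)).sub_const 1).div
      ((((hasDerivAt_id' x).const_mul 4).mul (hasDerivAt_sqrt hx0.ne')).mul
        ((hasDerivAt_sqrt h1x).comp x ((hasDerivAt_id' x).const_sub 1)))
      (by positivity)
  refine h.congr_deriv ?_
  simp only [bThird, Pi.mul_apply, Pi.sub_apply]
  field_simp
  grind

lemma continuousOn_bPrime : ContinuousOn bPrime (Ioi 0) :=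
  ContinuousOn.div (by fun_prop) (by fun_prop) fun x (hx : 0 < x) => by positivity

lemma bPrime_one : bPrime 1 = 0 := by simp [bPrime]

lemma strictConvexOn_bPrime : StrictConvexOn ℝ (Ioc 0 1) bPrime := by
  refine strictConvexOn_of_deriv2_pos (convex_Ioc 0 1)
    (continuousOn_bPrime.mono Ioc_subset_Ioi_self) fun x hx => ?_
  rw [interior_Ioc] at hx
  obtain ⟨hx0, hx1⟩ := hx
  have hderiv : deriv bPrime =ᶠ[𝓝 x] bSecond :=
    eventually_of_mem (Ioo_mem_nhds hx0 hx1) fun y hy => (hasDerivAt_bPrime hy.1 hy.2).deriv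
  rw [Function.iterate_succ_apply, Function.iterate_one, hderiv.deriv_eq,
    (hasDerivAt_bSecond hx0 hx1).deriv]
  have h1x : 0 < 1 - x := sub_pos.2 hx1
  unfold bThird
  positivity

lemma tendsto_bPrime_nhdsGT_zero : Tendsto bPrime (𝓝[>] 0) atTop := by
  have hnum : Tendsto (fun x : ℝ => (1 - 4 * x) * √(1 - x) / 2) (𝓝[>] 0) (𝓝 (1 / 2)) := by
    have hc : Continuous fun x : ℝ => (1 - 4 * x) * √(1 - x) / 2 := by fun_prop
    simpa using (hc.tendsto 0).mono_left nhdsWithin_le_nhds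
  have hsqrt : Tendsto (fun x : ℝ => √x) (𝓝[>] 0) (𝓝[>] 0) := by
    refine tendsto_nhdsWithin_iff.2 ⟨?_, eventually_nhdsWithin_of_forall fun x hx => sqrt_pos.2 hx⟩
    simpa using (continuous_sqrt.tendsto 0).mono_left nhdsWithin_le_nhds
  refine (hnum.pos_mul_atTop one_half_pos (tendsto_inv_nhdsGT_zero.comp hsqrt)).congr fun x => ?_
  simp only [bPrime, Function.comp_apply]
  ring

theorem stmt_3 (a1 a2 : ℝ) (h : a2 + a1 > 0) :
    ∃! x : ℝ, x ∈ Set.Ioo (0 : ℝ) 1 ∧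
      a2 * x + a1 = (1 - 4 * x) * Real.sqrt (1 - x) / (2 * Real.sqrt x) := by
  have hline : ConcaveOn ℝ (Ioc 0 1) fun x => a2 * x + a1 :=
    ((LinearMap.mul ℝ ℝ a2).concaveOn (convex_Ioc 0 1)).add_const a1
  have hzero := (strictConvexOn_bPrime.sub_concaveOn hline).existsUnique_zero zero_lt_one
    ((continuousOn_bPrime.mono Ioc_subset_Ioi_self).sub (by fun_prop))
    (tendsto_bPrime_nhdsGT_zero.atTop_add (tendsto_nhdsWithin_of_tendsto_nhds
      (Continuous.tendsto (by fun_prop : Continuous fun x : ℝ => -(a2 * x + a1)) 0)))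
    (by simp only [Pi.sub_apply, bPrime_one]; linarith)
  refine (existsUnique_congr fun x => and_congr_right fun _ => ?_).1 hzero
  rw [Pi.sub_apply, sub_eq_zero, eq_comm, bPrime]
end

section
/- Fix a1, a2, E ∈ ℝ. Suppose E is not of the form F(0,x) = a(x)+b(x) or F(π,x) = a(x)-b(x) at any critical point of F on ℝ × (0,1). Then every root x ∈ (0,1) of the quartic P(x) = ((a2/2)x^2 + a1 x - E)^2 - (1-x)^3 x is simple. -/
/-! On `(0, 1)` we have `b > 0` and `P = (a - E)² - b²`, so a root `x` of `P` satisfies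
`a x - E = ± b x`. There `P' = 2 (a - E) a' - 2 b b' = ± 2 b (a' ∓ b')`, so a double root also
satisfies `a' = ± b'`. Since `b'` is the derivative of `b`, the point `(0, x)` or `(π, x)` is then
a critical point of `F` at which `F = a ± b = E`. -/

open Filter Topology

theorem double_root_sq_sub_sq {f h k : ℝ → ℝ} {h' k' x : ℝ}
    (hf : f =ᶠ[𝓝 x] fun y => h y ^ 2 - k y ^ 2) (hh : HasDerivAt h h' x)
    (hk : HasDerivAt k k' x) (hk0 : k x ≠ 0) (hfx : f x = 0) (hf' : deriv f x = 0) :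
    (h x = k x ∧ h' = k') ∨ (h x = -k x ∧ h' = -k') := by
  have hderiv : 2 * h x * h' - 2 * k x * k' = 0 := by
    rw [← hf', (((hh.fun_pow 2).fun_sub (hk.fun_pow 2)).congr_of_eventuallyEq hf).deriv]
    push_cast; ring
  have hroot : (h x - k x) * (h x + k x) = 0 := by
    rw [hf.eq_of_nhds] at hfx; linear_combination hfx
  rcases mul_eq_zero.mp hroot with hhk | hhk
  · refine Or.inl ⟨by linarith, ?_⟩
    have : k x * (h' - k') = 0 := by linear_combination hderiv / 2 - h' * hhk
    linarith [(mul_eq_zero.mp this).resolve_left hk0]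
  · refine Or.inr ⟨by linarith, ?_⟩
    have : k x * (h' + k') = 0 := by linear_combination -hderiv / 2 + h' * hhk
    linarith [(mul_eq_zero.mp this).resolve_left hk0]

theorem hasDerivAt_sqrt_one_sub_pow_three_mul {x : ℝ} (hx : x ∈ Set.Ioo (0 : ℝ) 1) :
    HasDerivAt (fun y => √((1 - y) ^ 3 * y)) ((1 - 4 * x) * √(1 - x) / (2 * √x)) x := by
  obtain ⟨hx0, hx1⟩ := hx
  have hpoly : HasDerivAt (fun y : ℝ => (1 - y) ^ 3 * y) ((1 - x) ^ 2 * (1 - 4 * x)) x := by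
    refine ((((hasDerivAt_id' x).const_sub 1).fun_pow 3).fun_mul (hasDerivAt_id' x)).congr_deriv ?_
    norm_num
    ring
  convert hpoly.sqrt (by positivity) using 1
  have hsq : √(1 - x) ^ 2 = 1 - x := Real.sq_sqrt (by linarith)
  rw [show (1 - x) ^ 3 = (1 - x) ^ 2 * (1 - x) by ring,
    Real.sqrt_mul (by positivity), Real.sqrt_mul (by positivity), Real.sqrt_sq (by linarith)]
  field_simp
  linear_combination (1 - 4 * x) * hsq

theorem stmt_10 (a1 a2 E : ℝ) (P a b : ℝ → ℝ)
    (hP : ∀ x, P x = ((a2 / 2) * x ^ 2 + a1 * x - E) ^ 2 - (1 - x) ^ 3 * x)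
    (ha : ∀ x, a x = (a2 / 2) * x ^ 2 + a1 * x)
    (hb : ∀ x, b x = Real.sqrt ((1 - x) ^ 3 * x))
    (b' : ℝ → ℝ)
    (hb' : ∀ x, b' x = (1 - 4 * x) * Real.sqrt (1 - x) / (2 * Real.sqrt x))
    (hE : ∀ x ∈ Set.Ioo (0 : ℝ) 1,
      ((a2 * x + a1) + b' x = 0 → a x + b x ≠ E) ∧
      ((a2 * x + a1) - b' x = 0 → a x - b x ≠ E)) :
    ∀ x ∈ Set.Ioo (0 : ℝ) 1, P x = 0 → deriv P x ≠ 0 := by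
  intro x hx hPx hdP
  have hbx : HasDerivAt b (b' x) x := by
    rw [funext hb, hb']
    exact hasDerivAt_sqrt_one_sub_pow_three_mul hx
  have hax : HasDerivAt (fun y => a y - E) (a2 * x + a1) x := by
    rw [funext ha]
    refine ((((hasDerivAt_pow 2 x).const_mul (a2 / 2)).add
      ((hasDerivAt_id' x).const_mul a1)).sub_const E).congr_deriv ?_
    norm_num
    ring
  have hPeq : P =ᶠ[𝓝 x] fun y => (a y - E) ^ 2 - b y ^ 2 := by
    filter_upwards [Ioo_mem_nhds hx.1 hx.2] with y hy
    rw [hP, ha, hb, Real.sq_sqrt (mul_nonneg (pow_nonneg (by linarith [hy.2]) 3) hy.1.le)]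
  have hb0 : b x ≠ 0 := by
    rw [hb]
    exact Real.sqrt_ne_zero'.mpr (mul_pos (pow_pos (by linarith [hx.2]) 3) hx.1)
  rcases double_root_sq_sub_sq hPeq hax hbx hb0 hPx hdP with
    ⟨hroot, hcrit⟩ | ⟨hroot, hcrit⟩
  · exact (hE x hx).2 (by linarith) (by linarith)
  · exact (hE x hx).1 (by linarith) (by linarith)
end

section
/- Fix a1, a2, E ∈ ℝ with E ≠ (a2/2) + a1. Let t0 ∈ ℝ be a root of the polynomial P(t) = ((a2/2) + a1 - E)*t^4 + (a1 - 2E)*t^2 - t - E, and set x0 = t0^2 / (1 + t0^2). If t0 < 0 then a(x0) + b(x0) = E, and if t0 > 0 then a(x0) - b(x0) = E, where a(x) = (a2/2)x^2 + a1 x and b(x) = sqrt((1-x)^3 x). -/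
/-!
After the substitution `x₀ = t₀² / (1 + t₀²)`, the numerator of `a(x₀) - E` is `P(t₀) + t₀ = t₀`,
so `a(x₀) - E = t₀ / (1 + t₀²)²`, while `b(x₀) = |t₀| / (1 + t₀²)²`.
-/

theorem sqrt_one_sub_pow_three_mul_of_eq_div (t : ℝ) :
    √((1 - t ^ 2 / (1 + t ^ 2)) ^ 3 * (t ^ 2 / (1 + t ^ 2))) = |t| / (1 + t ^ 2) ^ 2 := by
  have hsq : (1 - t ^ 2 / (1 + t ^ 2)) ^ 3 * (t ^ 2 / (1 + t ^ 2))
      = (|t| / (1 + t ^ 2) ^ 2) ^ 2 := by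
    rw [div_pow, sq_abs]
    field_simp
    ring
  rw [hsq, Real.sqrt_sq (by positivity)]

theorem quadratic_sub_of_eq_div (c₂ c₁ E t : ℝ) :
    c₂ * (t ^ 2 / (1 + t ^ 2)) ^ 2 + c₁ * (t ^ 2 / (1 + t ^ 2)) - E
      = ((c₂ + c₁ - E) * t ^ 4 + (c₁ - 2 * E) * t ^ 2 - E) / (1 + t ^ 2) ^ 2 := by
  field_simp
  ring

theorem stmt_11_general (a1 a2 E : ℝ)
    (a b : ℝ → ℝ)
    (ha : ∀ x, a x = (a2 / 2) * x ^ 2 + a1 * x)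
    (hb : ∀ x, b x = Real.sqrt ((1 - x) ^ 3 * x))
    (t0 : ℝ)
    (hroot : (a2 / 2 + a1 - E) * t0 ^ 4 + (a1 - 2 * E) * t0 ^ 2 - t0 - E = 0)
    (x0 : ℝ) (hx0 : x0 = t0 ^ 2 / (1 + t0 ^ 2)) :
    (t0 < 0 → a x0 + b x0 = E) ∧ (t0 > 0 → a x0 - b x0 = E) := by
  have hb0 : b x0 = |t0| / (1 + t0 ^ 2) ^ 2 := by
    rw [hb, hx0, sqrt_one_sub_pow_three_mul_of_eq_div]
  have ha0 : a x0 = E + t0 / (1 + t0 ^ 2) ^ 2 := by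
    have hnum : (a2 / 2 + a1 - E) * t0 ^ 4 + (a1 - 2 * E) * t0 ^ 2 - E = t0 := by
      linear_combination hroot
    refine eq_add_of_sub_eq' ?_
    rw [ha, hx0, quadratic_sub_of_eq_div, hnum]
  refine ⟨fun hneg => ?_, fun hpos => ?_⟩
  · rw [ha0, hb0, abs_of_neg hneg]
    ring
  · rw [ha0, hb0, abs_of_pos hpos]
    ring

theorem stmt_11 (a1 a2 E : ℝ) (hE : E ≠ a2 / 2 + a1)
    (a b : ℝ → ℝ)
    (ha : ∀ x, a x = (a2 / 2) * x ^ 2 + a1 * x)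
    (hb : ∀ x, b x = Real.sqrt ((1 - x) ^ 3 * x))
    (t0 : ℝ)
    (hroot : (a2 / 2 + a1 - E) * t0 ^ 4 + (a1 - 2 * E) * t0 ^ 2 - t0 - E = 0)
    (x0 : ℝ) (hx0 : x0 = t0 ^ 2 / (1 + t0 ^ 2)) :
    (t0 < 0 → a x0 + b x0 = E) ∧ (t0 > 0 → a x0 - b x0 = E) :=
  stmt_11_general a1 a2 E a b ha hb t0 hroot x0 hx0
end

section
/- For 0 < k < 1 and a ∈ ℝ with |a| > 1/k, the integral ∫_1^{1/k} z / ((z^2 - a^2) * sqrt((z^2 - 1)*(1 - k^2 z^2))) dz equals -π / (2 * sqrt((a^2 - 1)*(a^2 k^2 - 1))). -/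
/-!
Substituting `t = z²` turns the integral into
`-(1/2k) ∫_1^{1/k²} dt / ((a² - t) √((t - 1)(1/k² - t)))`.
For `p < q < c`, a primitive of `1 / ((c - t) √((t - p)(q - t)))` on `(p, q)` is
`-arcsin (φ t) / √((c - p)(c - q))`, where `φ = mobiusArg p q c` is the Möbius map with
`p ↦ 1`, `q ↦ -1`, `c ↦ ∞`; as `φ` runs from `1` to `-1`, the integral is `π / √((c - p)(c - q))`.
Both integrands are unbounded at the endpoints but of constant sign, which is what makes the
fundamental theorem of calculus and the substitution applicable.
-/

open Real Set intervalIntegral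

theorem integral_eq_sub_of_hasDerivAt_of_nonneg {f f' : ℝ → ℝ} {a b : ℝ} (hab : a ≤ b)
    (hcont : ContinuousOn f (Icc a b)) (hderiv : ∀ x ∈ Ioo a b, HasDerivAt f (f' x) x)
    (hpos : ∀ x ∈ Ioo a b, 0 ≤ f' x) :
    ∫ x in a..b, f' x = f b - f a := by
  have hint : IntervalIntegrable f' MeasureTheory.volume a b := by
    apply intervalIntegrable_deriv_of_nonneg (uIcc_of_le hab ▸ hcont) <;>
      simpa only [min_eq_left hab, max_eq_right hab]
  exact integral_eq_sub_of_hasDerivAt_of_le hab hcont hderiv hint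

noncomputable def mobiusArg (p q c t : ℝ) : ℝ :=
  1 - 2 * (c - q) * (t - p) / ((q - p) * (c - t))

section mobiusArg

variable {p q c t : ℝ}

@[simp]
theorem mobiusArg_left : mobiusArg p q c p = 1 := by
  simp [mobiusArg]

theorem mobiusArg_right (hpq : p ≠ q) (hqc : q ≠ c) : mobiusArg p q c q = -1 := by
  have : q - p ≠ 0 := sub_ne_zero.2 hpq.symm
  have : c - q ≠ 0 := sub_ne_zero.2 hqc.symm
  rw [mobiusArg]
  field_simp
  ring

theorem one_sub_mobiusArg :
    1 - mobiusArg p q c t = 2 * (c - q) * (t - p) / ((q - p) * (c - t)) :=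
  sub_sub_cancel _ _

theorem one_add_mobiusArg (hpq : p ≠ q) (htc : t ≠ c) :
    1 + mobiusArg p q c t = 2 * (c - p) * (q - t) / ((q - p) * (c - t)) := by
  have : q - p ≠ 0 := sub_ne_zero.2 hpq.symm
  have : c - t ≠ 0 := sub_ne_zero.2 htc.symm
  rw [mobiusArg]
  field_simp
  ring

theorem mobiusArg_mem_Ioo (hpt : p < t) (htq : t < q) (hqc : q < c) :
    mobiusArg p q c t ∈ Ioo (-1) 1 := by
  have h1 := one_sub_mobiusArg (p := p) (q := q) (c := c) (t := t)
  have h2 := one_add_mobiusArg (c := c) (hpt.trans htq).ne (htq.trans hqc).ne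
  have : 0 < 2 * (c - q) * (t - p) / ((q - p) * (c - t)) := by
    apply div_pos <;> nlinarith
  have : 0 < 2 * (c - p) * (q - t) / ((q - p) * (c - t)) := by
    apply div_pos <;> nlinarith
  constructor <;> linarith

theorem sqrt_one_sub_mobiusArg_sq (hpt : p ≤ t) (htq : t ≤ q) (hpq : p < q) (hqc : q < c) :
    √(1 - mobiusArg p q c t ^ 2)
      = 2 * √((c - p) * (c - q)) * √((t - p) * (q - t)) / ((q - p) * (c - t)) := by
  have hct : 0 < (q - p) * (c - t) := by nlinarith
  have hcpq : 0 ≤ (c - p) * (c - q) := by nlinarith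
  have htpq : 0 ≤ (t - p) * (q - t) := by nlinarith
  have key : 1 - mobiusArg p q c t ^ 2
      = (2 * √((c - p) * (c - q)) * √((t - p) * (q - t)) / ((q - p) * (c - t))) ^ 2 := by
    rw [show 1 - mobiusArg p q c t ^ 2 = (1 - mobiusArg p q c t) * (1 + mobiusArg p q c t) by ring,
      one_sub_mobiusArg, one_add_mobiusArg hpq.ne (by linarith), div_pow, mul_pow, mul_pow,
      sq_sqrt hcpq, sq_sqrt htpq]
    field_simp
  rw [key, sqrt_sq (by positivity)]

theorem hasDerivAt_mobiusArg (hpq : p ≠ q) (htc : t ≠ c) :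
    HasDerivAt (mobiusArg p q c) (-(2 * (c - q) * (c - p)) / ((q - p) * (c - t) ^ 2)) t := by
  have hqp : q - p ≠ 0 := sub_ne_zero.2 hpq.symm
  have hct : c - t ≠ 0 := sub_ne_zero.2 htc.symm
  have h := (((hasDerivAt_id' t).sub_const p).const_mul (2 * (c - q))).div
    (((hasDerivAt_id' t).const_sub c).const_mul (q - p)) (mul_ne_zero hqp hct)
  refine (h.const_sub 1).congr_deriv ?_
  field_simp
  ring

theorem hasDerivAt_arcsin_mobiusArg (hpt : p < t) (htq : t < q) (hqc : q < c) :
    HasDerivAt (fun s ↦ arcsin (mobiusArg p q c s))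
      (-√((c - p) * (c - q)) / ((c - t) * √((t - p) * (q - t)))) t := by
  have hpq : p < q := hpt.trans htq
  obtain ⟨hlo, hhi⟩ := mobiusArg_mem_Ioo (c := c) hpt htq hqc
  have h := (hasDerivAt_arcsin hlo.ne' hhi.ne).comp t (hasDerivAt_mobiusArg hpq.ne (by linarith))
  refine h.congr_deriv ?_
  have hcpq : 0 < (c - p) * (c - q) := by nlinarith
  have htpq : 0 < (t - p) * (q - t) := by nlinarith
  rw [sqrt_one_sub_mobiusArg_sq hpt.le htq.le hpq hqc]
  have hsq := sq_sqrt hcpq.le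
  have : 0 < √((c - p) * (c - q)) := sqrt_pos.2 hcpq
  have : 0 < √((t - p) * (q - t)) := sqrt_pos.2 htpq
  have : c - t ≠ 0 := by linarith
  have : q - p ≠ 0 := by linarith
  field_simp
  linear_combination hsq

theorem continuousOn_mobiusArg (hpq : p ≠ q) (hqc : q < c) :
    ContinuousOn (mobiusArg p q c) (Icc p q) :=
  continuousOn_const.sub <| ContinuousOn.div (by fun_prop) (by fun_prop) fun _ hs ↦
    mul_ne_zero (sub_ne_zero.2 hpq.symm) (sub_ne_zero.2 (hs.2.trans_lt hqc).ne')

end mobiusArg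

theorem integral_one_div_mul_sqrt_eq_pi_div_sqrt {p q c : ℝ} (hpq : p < q) (hqc : q < c) :
    ∫ t in p..q, 1 / ((c - t) * √((t - p) * (q - t))) = π / √((c - p) * (c - q)) := by
  have hS : 0 < √((c - p) * (c - q)) := sqrt_pos.2 (by nlinarith)
  have hderiv : ∀ t ∈ Ioo p q,
      HasDerivAt (fun s ↦ -arcsin (mobiusArg p q c s) / √((c - p) * (c - q)))
        (1 / ((c - t) * √((t - p) * (q - t)))) t := fun t ht ↦ by
    refine ((hasDerivAt_arcsin_mobiusArg ht.1 ht.2 hqc).neg.div_const _).congr_deriv ?_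
    field_simp
  rw [integral_eq_sub_of_hasDerivAt_of_nonneg hpq.le ?_ hderiv fun t ht ↦ ?_,
    mobiusArg_left, mobiusArg_right hpq.ne hqc.ne, arcsin_one, arcsin_neg_one]
  · ring
  · exact (continuous_arcsin.comp_continuousOn (continuousOn_mobiusArg hpq.ne hqc)).neg.div_const _
  · have := ht.1; have := ht.2
    have : 0 < √((t - p) * (q - t)) := sqrt_pos.2 (by nlinarith)
    have : 0 < c - t := by linarith
    positivity

theorem stmt_17 (k a : ℝ) (hk0 : 0 < k) (hk1 : k < 1) (ha : 1 / k < |a|) :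
    ∫ z in (1 : ℝ)..(1 / k),
        z / ((z ^ 2 - a ^ 2) * Real.sqrt ((z ^ 2 - 1) * (1 - k ^ 2 * z ^ 2)))
      = -Real.pi / (2 * Real.sqrt ((a ^ 2 - 1) * (a ^ 2 * k ^ 2 - 1))) := by
  have hq : 1 < (1 / k) ^ 2 := one_lt_pow₀ ((one_lt_div hk0).2 hk1) two_ne_zero
  have hc : (1 / k) ^ 2 < a ^ 2 := sq_abs a ▸ pow_lt_pow_left₀ ha (by positivity) two_ne_zero
  have hscale : ∀ x y, √(x * (k ^ 2 * y)) = k * √(x * y) := fun x y ↦ by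
    rw [mul_left_comm, sqrt_mul (sq_nonneg k), sqrt_sq hk0.le]
  set g : ℝ → ℝ := fun t ↦ -(2 * k)⁻¹ * (1 / ((a ^ 2 - t) * √((t - 1) * ((1 / k) ^ 2 - t))))
  calc ∫ z in (1 : ℝ)..(1 / k), z / ((z ^ 2 - a ^ 2) * √((z ^ 2 - 1) * (1 - k ^ 2 * z ^ 2)))
      = ∫ z in (1 : ℝ)..(1 / k), (g ∘ fun z ↦ z ^ 2) z * (2 * z) := by
        congr 1; ext z
        rw [show 1 - k ^ 2 * z ^ 2 = k ^ 2 * ((1 / k) ^ 2 - z ^ 2) by field_simp, hscale]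
        simp only [g, Function.comp_apply, ← neg_sub (z ^ 2) (a ^ 2)]
        generalize √((z ^ 2 - 1) * ((1 / k) ^ 2 - z ^ 2)) = s
        generalize z ^ 2 - a ^ 2 = w
        ring
    _ = ∫ t in (1 : ℝ) ^ 2..(1 / k) ^ 2, g t :=
        integral_comp_mul_deriv_of_deriv_nonneg (by fun_prop)
          (fun z _ ↦ by simpa using hasDerivAt_pow 2 z) fun z hz ↦ by
            linarith [(lt_min one_pos (by positivity)).trans hz.1]
    _ = -(2 * k)⁻¹ * (π / √((a ^ 2 - 1) * (a ^ 2 - (1 / k) ^ 2))) := by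
        rw [one_pow, integral_const_mul, integral_one_div_mul_sqrt_eq_pi_div_sqrt hq hc]
    _ = -π / (2 * √((a ^ 2 - 1) * (a ^ 2 * k ^ 2 - 1))) := by
        rw [show a ^ 2 * k ^ 2 - 1 = k ^ 2 * (a ^ 2 - (1 / k) ^ 2) by field_simp, hscale]
        field_simp
end
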